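/- Let d be symmetric nonnegative with the α-relaxed triangle inequality (α ≥ 1). Let G_i and O be finite sets with |O| = p ≥ 2 and |G_i| = i ≤ p−1, A = O ∩ G_i, B = G_i \ A, C = O \ A with |C| ≥ 2. Then d(C, G_i) ≥ d(O)·(i·|C|)/(α·p·(p−1)), where d(C,G_i) = d(C,A) + d(C,B). -/

import Mathlib

open Finset

noncomputable def dSet {U : Type*} (d : U → U → ℝ) (X : Finset U) : ℝ :=
  (∑ u ∈ X, ∑ v ∈ X, d u v) / 2

noncomputable def dCross {U : Type*} (d : U → U → ℝ) (X Y : Finset U) : ℝ :=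
  ∑ u ∈ X, ∑ v ∈ Y, d u v

/-!
Averaging the relaxed triangle inequality `d x y ≤ α (d x z + d z y)` over the points `z` of a
set `Z` bounds `|Z| · d(X)` by `α (|X| - 1) · d(X, Z)`. Writing `O = A ∪ C` and `Gᵢ = A ∪ B`,
this bounds `|C| d(A)` by `d(C, A)`, and `|A| d(C)`, `|B| d(C)` by `d(C, A)`, `d(C, B)`.
Since `|B| < |C|` (as `i < p`), the weights `|C| - |B|` and `|A| + |C|` on the last two are
nonnegative and combine them into a bound on `i |C| d(C)`; the rest is elementary algebra.
-/

section Dispersion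

variable {U : Type*} {d : U → U → ℝ}

lemma dCross_nonneg (hnn : ∀ u v, 0 ≤ d u v) (X Y : Finset U) : 0 ≤ dCross d X Y :=
  sum_nonneg fun u _ => sum_nonneg fun v _ => hnn u v

lemma dCross_comm (hsymm : ∀ u v, d u v = d v u) (X Y : Finset U) :
    dCross d X Y = dCross d Y X := by
  rw [dCross, dCross, sum_comm]
  exact sum_congr rfl fun _ _ => sum_congr rfl fun _ _ => hsymm _ _

lemma dCross_union_right [DecidableEq U] {Y Z : Finset U} (h : Disjoint Y Z) (X : Finset U) :
    dCross d X (Y ∪ Z) = dCross d X Y + dCross d X Z := by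
  simp only [dCross, sum_union h, sum_add_distrib]

lemma dSet_union [DecidableEq U] (hsymm : ∀ u v, d u v = d v u) {X Y : Finset U}
    (h : Disjoint X Y) :
    dSet d (X ∪ Y) = dSet d X + dSet d Y + dCross d X Y := by
  have hXY := dCross_comm hsymm X Y
  simp only [dSet, dCross, sum_union h, sum_add_distrib] at hXY ⊢
  linarith

lemma card_mul_dSet_le [DecidableEq U] (α : ℝ) (hsymm : ∀ u v, d u v = d v u)
    (hself : ∀ u, d u u = 0) (htri : ∀ u v w, d u v ≤ α * (d v w + d w u)) (X Z : Finset U) :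
    (#Z : ℝ) * dSet d X ≤ α * (#X - 1) * dCross d X Z := by
  set F : U → ℝ := fun x => ∑ z ∈ Z, d x z
  have hpair : ∀ x y, (#Z : ℝ) * d x y ≤ α * (F x + F y) := fun x y => by
    rw [← nsmul_eq_mul, ← sum_const, mul_add, mul_sum, mul_sum, ← sum_add_distrib]
    exact sum_le_sum fun z _ => (htri x y z).trans_eq (by rw [hsymm z x, add_comm, mul_add])
  have hrow : ∀ x ∈ X, (#Z : ℝ) * ∑ y ∈ X, d x y
      ≤ α * ((#X - 1) * F x + ((∑ y ∈ X, F y) - F x)) := fun x hx => by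
    rw [← add_sum_erase X _ hx, hself, zero_add, mul_sum]
    calc ∑ y ∈ X.erase x, (#Z : ℝ) * d x y ≤ ∑ y ∈ X.erase x, α * (F x + F y) :=
          sum_le_sum fun y _ => hpair x y
      _ = α * ((#X - 1) * F x + ((∑ y ∈ X, F y) - F x)) := by
          rw [← mul_sum, sum_add_distrib, sum_const, nsmul_eq_mul, cast_card_erase_of_mem hx,
            sum_erase_eq_sub hx]
  calc (#Z : ℝ) * dSet d X = (∑ x ∈ X, (#Z : ℝ) * ∑ y ∈ X, d x y) / 2 := by
        rw [dSet, ← mul_sum, mul_div_assoc]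
    _ ≤ (∑ x ∈ X, α * ((#X - 1) * F x + ((∑ y ∈ X, F y) - F x))) / 2 := by
        gcongr ?_ / 2
        exact sum_le_sum hrow
    _ = α * (#X - 1) * dCross d X Z := by
        rw [dCross, ← mul_sum, sum_add_distrib, ← mul_sum, sum_sub_distrib, sum_const,
          nsmul_eq_mul]
        ring

theorem dSet_mul_card_le_dCross [DecidableEq U] (α : ℝ) (hα : 1 ≤ α) (hnn : ∀ u v, 0 ≤ d u v)
    (hsymm : ∀ u v, d u v = d v u) (hself : ∀ u, d u u = 0)
    (htri : ∀ u v w, d u v ≤ α * (d v w + d w u)) {A B C : Finset U}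
    (hAB : Disjoint A B) (hAC : Disjoint A C) (hBC : #B ≤ #C) :
    dSet d (A ∪ C) * ((#A + #B) * #C)
      ≤ α * (#A + #C) * (#A + #C - 1) * dCross d C (A ∪ B) := by
  have hA := card_mul_dSet_le α hsymm hself htri A C
  have hCA := card_mul_dSet_le α hsymm hself htri C A
  have hCB := card_mul_dSet_le α hsymm hself htri C B
  rw [dCross_comm hsymm A C] at hA
  rw [dSet_union hsymm hAC, dCross_comm hsymm A C, dCross_union_right hAB]
  have hs := dCross_nonneg hnn C A
  have hu := dCross_nonneg hnn C B
  have hBC' : (#B : ℝ) ≤ #C := by exact_mod_cast hBC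
  set a : ℝ := ((#A : ℕ) : ℝ)
  set b : ℝ := ((#B : ℕ) : ℝ)
  set c : ℝ := ((#C : ℕ) : ℝ)
  have ha : 0 ≤ a := Nat.cast_nonneg _
  have hb : 0 ≤ b := Nat.cast_nonneg _
  linarith [mul_le_mul_of_nonneg_left hA (by linarith : 0 ≤ a + b),
    mul_le_mul_of_nonneg_left hCA (by linarith : 0 ≤ c - b),
    mul_le_mul_of_nonneg_left hCB (by linarith : 0 ≤ a + c),
    mul_le_mul_of_nonneg_right hα (by positivity : 0 ≤ (a + b) * c * dCross d C A),
    mul_nonneg (mul_nonneg (by linarith : 0 ≤ α) (by linarith : 0 ≤ c - b)) (mul_nonneg ha hs),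
    mul_nonneg (mul_nonneg (by linarith : 0 ≤ α) (by linarith : 0 ≤ a + c)) (mul_nonneg ha hu)]

end Dispersion

theorem stmt10_general {U : Type*} [DecidableEq U] (d : U → U → ℝ) (α : ℝ) (hα : 1 ≤ α)
    (hnn : ∀ u v, 0 ≤ d u v) (hsymm : ∀ u v, d u v = d v u)
    (hself : ∀ u, d u u = 0)
    (htri : ∀ u v w, d u v ≤ α * (d v w + d w u))
    (Gi O : Finset U) (p i : ℕ)
    (hp : O.card = p) (hi : Gi.card = i) (hip : i < p) :
    dCross d (O \ Gi) Gi
      ≥ dSet d O * ((i : ℝ) * ((O \ Gi).card : ℝ)) / (α * (p : ℝ) * ((p : ℝ) - 1)) := by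
  have hO : O ∩ Gi ∪ O \ Gi = O := by simpa only [union_comm] using sdiff_union_inter O Gi
  have hGi : O ∩ Gi ∪ Gi \ O = Gi := by
    simpa only [union_comm, inter_comm] using sdiff_union_inter Gi O
  have hcardO : #(O ∩ Gi) + #(O \ Gi) = p := hp ▸ card_inter_add_card_sdiff O Gi
  have hcardGi : #(O ∩ Gi) + #(Gi \ O) = i := by
    rw [inter_comm, ← hi]; exact card_inter_add_card_sdiff Gi O
  have key := dSet_mul_card_le_dCross (A := O ∩ Gi) (B := Gi \ O) (C := O \ Gi)
    α hα hnn hsymm hself htri (disjoint_of_subset_left inter_subset_left disjoint_sdiff)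
    (disjoint_of_subset_left inter_subset_right disjoint_sdiff) (by omega)
  rw [hO, hGi] at key
  have hp1 : (1 : ℝ) ≤ p := by exact_mod_cast (show 1 ≤ p by omega)
  refine div_le_of_le_mul₀ (mul_nonneg (by positivity) (by linarith)) (dCross_nonneg hnn _ _) ?_
  rw [← hcardO, ← hcardGi]
  push_cast
  linarith

theorem stmt10 {U : Type*} [DecidableEq U] (d : U → U → ℝ) (α : ℝ) (hα : 1 ≤ α)
    (hnn : ∀ u v, 0 ≤ d u v) (hsymm : ∀ u v, d u v = d v u)
    (hself : ∀ u, d u u = 0)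
    (htri : ∀ u v w, d u v ≤ α * (d v w + d w u))
    (Gi O : Finset U) (p i : ℕ)
    (hp : O.card = p) (hp2 : 2 ≤ p) (hi : Gi.card = i) (hip : i < p)
    (hC : 2 ≤ (O \ Gi).card) :
    dCross d (O \ Gi) Gi
      ≥ dSet d O * ((i : ℝ) * ((O \ Gi).card : ℝ)) / (α * (p : ℝ) * ((p : ℝ) - 1)) :=
  stmt10_general d α hα hnn hsymm hself htri Gi O p i hp hi hip
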